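/- Let Q ⊂ ℝ^n be a full-dimensional simplicial reflexive polytope. Then (ι_Q − 1)·(|V(Q)| − n) ≤ n. (This is the combinatorial form, for toric varieties, of the inequality (ι_X − 1)ρ_X ≤ d for ℚ-factorial Fano varieties X: here ι_Q is the pseudo-index and |V(Q)| − n the Picard number of the toric Fano variety whose fan is spanned by the faces of Q.) -/

import Mathlib

open Matrix

/-- The polar dual `Q* = {v | ⟨v,u⟩ ≥ -1 for all u ∈ Q}`. -/
def polarDual {n : ℕ} (Q : Set (Fin n → ℝ)) : Set (Fin n → ℝ) :=
  {v | ∀ u ∈ Q, -1 ≤ v ⬝ᵥ u}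

/-- A vector of `ℝ^n` is integral if all its coordinates are integers. -/
def isIntegral {n : ℕ} (u : Fin n → ℝ) : Prop := ∀ i, ∃ z : ℤ, u i = (z : ℝ)

/-- A vector of `(ℝ^n)*` is a primitive element of the dual lattice `(ℤ^n)*` if its
coordinates are integers whose gcd is `1`. -/
def isPrimitive {n : ℕ} (χ : Fin n → ℝ) : Prop :=
  ∃ c : Fin n → ℤ, (∀ i, χ i = (c i : ℝ)) ∧ Finset.univ.gcd c = 1

/-- The set of numbers `(1 + ⟨v,u⟩)/⟨χ_μ,u⟩` over all `(n-2)`-dimensional faces `μ` of the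
simplicial reflexive polytope `Q` and both orderings `(F_v, F_{v'})` of the two facets of `Q`
containing `μ`; here `u` is the unique vertex of `F_{v'}` not lying in `μ` (encoded as: `u` is
a vertex of `F_{v'}` not in `F_v`, and all other vertices of `F_{v'}` lie in `F_v`), and
`χ_μ` is the primitive element of `(ℤ^n)*` vanishing on the linear span of `μ` (i.e. on all
vertices of `F_{v'}` other than `u`) with `⟨χ_μ,u⟩ > 0`.  `ι_Q` is its minimum. -/
def iotaSet {n : ℕ} (VQ VQd : Finset (Fin n → ℝ)) : Set ℝ :=
  {x | ∃ v ∈ VQd, ∃ v' ∈ VQd, v ≠ v' ∧ ∃ u ∈ VQ,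
    v' ⬝ᵥ u = -1 ∧ v ⬝ᵥ u ≠ -1 ∧
    (∀ w ∈ VQ, v' ⬝ᵥ w = -1 → w ≠ u → v ⬝ᵥ w = -1) ∧
    ∃ χ : Fin n → ℝ, isPrimitive χ ∧
      (∀ w ∈ VQ, v' ⬝ᵥ w = -1 → w ≠ u → χ ⬝ᵥ w = 0) ∧
      0 < χ ⬝ᵥ u ∧ x = (1 + v ⬝ᵥ u) / (χ ⬝ᵥ u)}

/-!
Let `s = ∑_{u ∈ V(Q)} u`. Since `0 ∈ Q*`, the linear form `⟨·, s⟩` is `≤ 0` somewhere on the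
compact set `Q*`, hence at some vertex `v₀` of `Q*`. The `n` vertices of the facet `F_{v₀}`
contribute `-n` to `⟨v₀, s⟩`, so it suffices that `⟨v₀, u⟩ ≥ ι_Q - 1` for each of the remaining
`|V(Q)| - n` vertices `u`.

For such `u`, reflexivity gives `⟨v₀, u⟩ ≥ 0`, so `u` has a negative coordinate, say at `b`, in
the basis of `ℝ^n` formed by the vertices of `F_{v₀}`. Let `χ` be the primitive normal of the
wall `F_{v₀} \ {b}` with `⟨χ, u⟩ > 0`. Moving `v₀` to `v₀ - tχ` with the largest `t` keeping it
in `Q*` lands on the neighbouring vertex `v'` of `Q*`, whose facet is the wall together with some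
vertex `u₀`, and `t = (1 + ⟨v₀, u₀⟩)/⟨χ, u₀⟩ ≥ ι_Q`. Minimality of `t` and `⟨χ, u⟩ ≥ 1` give
`ι_Q ≤ (1 + ⟨v₀, u⟩)/⟨χ, u⟩ ≤ 1 + ⟨v₀, u⟩`.
-/

open Filter Topology Submodule

theorem IsCompact.exists_mem_extremePoints_isMinOn {E : Type*} [AddCommGroup E] [Module ℝ E]
    [TopologicalSpace E] [T2Space E] [IsTopologicalAddGroup E] [ContinuousSMul ℝ E]
    [LocallyConvexSpace ℝ E] {s : Set E} (hs : IsCompact s) (hne : s.Nonempty)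
    (l : StrongDual ℝ E) : ∃ x ∈ s.extremePoints ℝ, IsMinOn l s x := by
  obtain ⟨z, hz, hzmin⟩ := hs.exists_isMinOn hne l.continuous.continuousOn
  set F := {x ∈ s | ∀ y ∈ s, (-l) y ≤ (-l) x}
  have hF : IsExposed ℝ s F := fun _ => ⟨-l, rfl⟩
  have hzF : z ∈ F := ⟨hz, fun y hy => neg_le_neg (hzmin hy)⟩
  obtain ⟨x, hx⟩ := (hF.isCompact hs).extremePoints_nonempty ⟨z, hzF⟩
  exact ⟨x, hF.isExtreme.extremePoints_subset_extremePoints hx,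
    fun y hy => by simpa using hx.1.2 y hy⟩

theorem eq_zero_of_mem_extremePoints_of_eventually_add_smul_mem {E : Type*} [AddCommGroup E]
    [Module ℝ E] {A : Set E} {x y : E} (hx : x ∈ A.extremePoints ℝ)
    (h : ∀ᶠ t in 𝓝 (0 : ℝ), x + t • y ∈ A) : y = 0 := by
  have hneg : ∀ᶠ t in 𝓝 (0 : ℝ), x - t • y ∈ A := by
    simpa [sub_eq_add_neg, neg_smul] using (continuous_neg.tendsto' 0 0 neg_zero).eventually h
  obtain ⟨t, ht, hsub, hadd⟩ := (hneg.and h).exists_gt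
  have := hx.2 hsub hadd (mem_openSegment_sub_add x (t • y))
  simpa [ht.ne'] using this

theorem span_insert_eq_top_of_notMem_span {K V : Type*} [DivisionRing K] [AddCommGroup V]
    [Module K V] {T : Set V} {b u : V} (hspan : span K (insert b T) = ⊤) (hu : u ∉ span K T) :
    span K (insert u T) = ⊤ := by
  have hb : b ∈ span K (insert u T) := mem_span_insert_exchange (hspan ▸ mem_top) hu
  refine eq_top_iff.2 (hspan ▸ span_le.2 ?_)
  rintro w (rfl | hw)
  exacts [hb, subset_span (Set.mem_insert_of_mem _ hw)]

section DotProduct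

variable {m R : Type*} [Fintype m]

theorem Module.Basis.dotProduct_eq_sum_repr [CommRing R] {ι : Type*} [Fintype ι]
    (𝔅 : Module.Basis ι R (m → R)) (y x : m → R) :
    y ⬝ᵥ x = ∑ j, 𝔅.repr x j * (y ⬝ᵥ 𝔅 j) := by
  conv_lhs => rw [← 𝔅.sum_repr x]
  simp only [dotProduct_sum, dotProduct_smul, smul_eq_mul]

theorem dotProduct_eq_zero_of_mem_span [Field R] [DecidableEq m] {S : Set (m → R)} {y x : m → R}
    (hy : ∀ w ∈ S, y ⬝ᵥ w = 0) (hx : x ∈ span R S) : y ⬝ᵥ x = 0 :=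
  (span_le (p := LinearMap.ker (dotProductEquiv R m y))).2 hy hx

theorem span_eq_top_iff_forall_dotProduct_eq_zero [Field R] [DecidableEq m] {S : Set (m → R)} :
    span R S = ⊤ ↔ ∀ y : m → R, (∀ w ∈ S, y ⬝ᵥ w = 0) → y = 0 := by
  rw [← dualAnnihilator_eq_bot_iff, eq_bot_iff]
  constructor
  · intro h y hy
    have : dotProductEquiv R m y ∈ (span R S).dualAnnihilator :=
      (mem_dualAnnihilator _).2 fun x hx => dotProduct_eq_zero_of_mem_span hy hx
    simpa using h this
  · intro h f hf
    rw [mem_dualAnnihilator] at hf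
    have := h ((dotProductEquiv R m).symm f) fun w hw =>
      (congrArg (· w) ((dotProductEquiv R m).apply_symm_apply f)).trans (hf w (subset_span hw))
    simpa using this

end DotProduct

section Polar

variable {n : ℕ}

theorem mem_polarDual_convexHull_iff {V : Set (Fin n → ℝ)} {v : Fin n → ℝ} :
    v ∈ polarDual (convexHull ℝ V) ↔ ∀ w ∈ V, -1 ≤ v ⬝ᵥ w :=
  ⟨fun hv w hw => hv w (subset_convexHull ℝ V hw), fun hv _ hu =>
    convexHull_min hv
      (convex_halfSpace_ge ⟨dotProduct_add v, fun c x => dotProduct_smul c v x⟩ _) hu⟩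

theorem isCompact_polarDual {Q : Set (Fin n → ℝ)} (hQ : Q ∈ 𝓝 0) : IsCompact (polarDual Q) := by
  refine Metric.isCompact_iff_isClosed_bounded.2 ⟨?_, ?_⟩
  · simp only [polarDual, Set.ofPred_forall]
    exact isClosed_biInter fun u _ => isClosed_le continuous_const
      (continuous_id.dotProduct continuous_const : Continuous fun v : Fin n → ℝ => v ⬝ᵥ u)
  obtain ⟨δ, hδ, hball⟩ := Metric.mem_nhds_iff.1 hQ
  refine (Metric.isBounded_closedBall (x := 0) (r := 2 / δ)).subset fun v hv => ?_
  rw [mem_closedBall_zero_iff, pi_norm_le_iff_of_nonneg (by positivity)]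
  intro k
  have hmem : ∀ a : ℝ, |a| = δ / 2 → -1 ≤ v k * a := fun a ha => by
    refine (dotProduct_single v a k) ▸ hv _ (hball ?_)
    rw [mem_ball_zero_iff, Pi.norm_single, Real.norm_eq_abs, ha]
    linarith
  have h₁ := hmem (δ / 2) (abs_of_pos (by positivity))
  have h₂ := hmem (-(δ / 2)) (by rw [abs_neg, abs_of_pos (by positivity)])
  rw [Real.norm_eq_abs, le_div_iff₀ hδ]
  cases abs_cases (v k) <;> nlinarith

theorem zero_mem_polarDual (Q : Set (Fin n → ℝ)) : 0 ∈ polarDual Q := fun u _ => by simp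

theorem exists_mem_extremePoints_polarDual_dotProduct_nonpos {Q : Set (Fin n → ℝ)}
    (hQ : Q ∈ 𝓝 0) (s : Fin n → ℝ) :
    ∃ v ∈ (polarDual Q).extremePoints ℝ, v ⬝ᵥ s ≤ 0 := by
  obtain ⟨v, hv, hmin⟩ := (isCompact_polarDual hQ).exists_mem_extremePoints_isMinOn
    ⟨0, zero_mem_polarDual Q⟩ (LinearMap.toContinuousLinearMap (dotProductEquiv ℝ (Fin n) s))
  refine ⟨v, hv, ?_⟩
  simpa [dotProduct_comm s] using hmin (zero_mem_polarDual Q)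

theorem sub_smul_mem_polarDual_convexHull {V : Set (Fin n → ℝ)} {v χ : Fin n → ℝ} {t : ℝ}
    (hv : v ∈ polarDual (convexHull ℝ V)) (ht : 0 ≤ t)
    (hχ : ∀ w ∈ V, 0 < χ ⬝ᵥ w → t * (χ ⬝ᵥ w) ≤ 1 + v ⬝ᵥ w) :
    v - t • χ ∈ polarDual (convexHull ℝ V) := by
  rw [mem_polarDual_convexHull_iff] at hv ⊢
  intro w hw
  rw [sub_dotProduct, smul_dotProduct, smul_eq_mul]
  by_cases hχw : 0 < χ ⬝ᵥ w
  · linarith [hχ w hw hχw]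
  · nlinarith [hv w hw, not_lt.1 hχw]

theorem mem_extremePoints_polarDual_of_span_eq_top {Q S : Set (Fin n → ℝ)} {v : Fin n → ℝ}
    (hv : v ∈ polarDual Q) (hSQ : S ⊆ Q) (htight : ∀ w ∈ S, v ⬝ᵥ w = -1) (hS : span ℝ S = ⊤) :
    v ∈ (polarDual Q).extremePoints ℝ := by
  refine mem_extremePoints_iff_left.2 ⟨hv, fun p hp q hq ⟨a, b, ha, hb, hab, hpq⟩ => ?_⟩
  rw [← sub_eq_zero]
  refine span_eq_top_iff_forall_dotProduct_eq_zero.1 hS _ fun w hw => ?_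
  have hsum : a * (p ⬝ᵥ w) + b * (q ⬝ᵥ w) = -1 := by
    rw [← htight w hw, ← hpq]; simp [add_dotProduct, smul_dotProduct]
  have hpw := hp w (hSQ hw)
  have hqw := hq w (hSQ hw)
  rw [sub_dotProduct, htight w hw]
  nlinarith

end Polar

section Lattice

variable {n : ℕ}

theorem isIntegral.exists_dotProduct_eq {v w : Fin n → ℝ} (hv : isIntegral v) (hw : isIntegral w) :
    ∃ z : ℤ, v ⬝ᵥ w = z := by
  choose a ha using hv
  choose b hb using hw
  exact ⟨∑ i, a i * b i, by simp [dotProduct, ha, hb]⟩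

theorem isPrimitive.isIntegral {χ : Fin n → ℝ} (h : isPrimitive χ) : isIntegral χ := by
  obtain ⟨c, hc, -⟩ := h
  exact fun i => ⟨c i, hc i⟩

theorem isPrimitive.neg {χ : Fin n → ℝ} (h : isPrimitive χ) : isPrimitive (-χ) := by
  obtain ⟨c, hc, hgcd⟩ := h
  refine ⟨-c, fun i => by simp [hc i], ?_⟩
  rw [← hgcd, ← Finset.normalize_gcd (f := -c), ← Finset.normalize_gcd (f := c)]
  exact normalize_eq_normalize (Finset.dvd_gcd fun i hi => dvd_neg.1 (Finset.gcd_dvd hi))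
    (Finset.dvd_gcd fun i hi => dvd_neg.2 (Finset.gcd_dvd hi))

theorem exists_isPrimitive_smul_eq {c : Fin n → ℤ} (hc : c ≠ 0) :
    ∃ g : ℤ, 0 < g ∧ ∃ χ, isPrimitive χ ∧ (fun k => (c k : ℝ)) = (g : ℝ) • χ := by
  obtain ⟨k₀, hk₀⟩ := Function.ne_iff.1 hc
  obtain ⟨d, hd, hgcd⟩ := Finset.extract_gcd c ⟨k₀, Finset.mem_univ k₀⟩
  have hpos : 0 < Finset.univ.gcd c := by
    refine lt_of_le_of_ne (Int.nonneg_of_normalize_eq_self Finset.normalize_gcd) fun h => hk₀ ?_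
    exact Finset.gcd_eq_zero_iff.1 h.symm k₀ (Finset.mem_univ k₀)
  refine ⟨_, hpos, fun k => (d k : ℝ), ⟨d, fun _ => rfl, hgcd⟩, funext fun k => ?_⟩
  simp [hd k (Finset.mem_univ k)]

/-- By Cramer's rule, `𝔅.coord i` is `det⁻¹` times a row of the adjugate, an integral vector. -/
theorem exists_isPrimitive_dotProduct_eq_mul_repr (𝔅 : Module.Basis (Fin n) ℝ (Fin n → ℝ))
    (h𝔅 : ∀ j, isIntegral (𝔅 j)) (i : Fin n) :
    ∃ χ, isPrimitive χ ∧ ∃ c : ℝ, 0 < c ∧ ∀ x, χ ⬝ᵥ x = c * 𝔅.repr x i := by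
  choose z hz using h𝔅
  set A := (Pi.basisFun ℝ (Fin n)).toMatrix 𝔅
  have hA : A = (Int.castRingHom ℝ).mapMatrix (Matrix.of fun k j => z j k) := by
    ext k j; simp [A, Module.Basis.toMatrix_apply, hz]
  have hinv : A⁻¹ = 𝔅.toMatrix (Pi.basisFun ℝ (Fin n)) :=
    Matrix.inv_eq_left_inv (𝔅.toMatrix_mul_toMatrix_flip _)
  have hrow : ∀ x, (fun k => A⁻¹ i k) ⬝ᵥ x = 𝔅.repr x i := by
    intro x
    rw [hinv, ← 𝔅.coord_apply, LinearMap.pi_apply_eq_sum_univ (𝔅.coord i) x]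
    simp only [dotProduct, Module.Basis.toMatrix_apply, Pi.basisFun_apply, smul_eq_mul,
      Module.Basis.coord_apply, mul_comm]
    refine Finset.sum_congr rfl fun k _ => ?_
    congr
    ext j
    simp [Pi.single_apply, eq_comm]
  set c : Fin n → ℤ := fun k => (Matrix.of fun k j => z j k).adjugate i k
  have hdet : A.det ≠ 0 := Matrix.det_ne_zero_of_left_inverse (𝔅.toMatrix_mul_toMatrix_flip _)
  have hc : (fun k => A⁻¹ i k) = (A.det)⁻¹ • fun k => (c k : ℝ) := by
    ext k
    rw [Matrix.inv_def, hA, ← RingHom.map_adjugate, ← hA, Ring.inverse_eq_inv']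
    simp [c]
  have hc0 : c ≠ 0 := fun h => by simpa [hc, h] using hrow (𝔅 i)
  obtain ⟨g, hg, χ, hχ, hcg⟩ := exists_isPrimitive_smul_eq hc0
  have hgR : (0 : ℝ) < g := Int.cast_pos.2 hg
  have hχx : ∀ x, χ ⬝ᵥ x = A.det / g * 𝔅.repr x i := fun x => by
    rw [← hrow x, hc, hcg, smul_smul, smul_dotProduct, smul_eq_mul]
    field_simp
  rcases hdet.lt_or_gt with hneg | hpos
  · exact ⟨-χ, hχ.neg, -(A.det / g), neg_pos.2 (div_neg_of_neg_of_pos hneg hgR),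
      fun x => by rw [neg_dotProduct, hχx, neg_mul]⟩
  · exact ⟨χ, hχ, A.det / g, div_pos hpos hgR, hχx⟩

end Lattice

section Facets

variable {n : ℕ}

noncomputable def facetVertices (V : Finset (Fin n → ℝ)) (v : Fin n → ℝ) : Finset (Fin n → ℝ) :=
  V.filter fun w => v ⬝ᵥ w = -1

@[simp]
theorem mem_facetVertices {V : Finset (Fin n → ℝ)} {v w : Fin n → ℝ} :
    w ∈ facetVertices V v ↔ w ∈ V ∧ v ⬝ᵥ w = -1 :=
  Finset.mem_filter

theorem span_facetVertices_eq_top {V : Finset (Fin n → ℝ)} {v : Fin n → ℝ}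
    (hv : v ∈ (polarDual (convexHull ℝ (V : Set (Fin n → ℝ)))).extremePoints ℝ) :
    span ℝ (facetVertices V v : Set (Fin n → ℝ)) = ⊤ := by
  refine span_eq_top_iff_forall_dotProduct_eq_zero.2 fun y hy => ?_
  refine eq_zero_of_mem_extremePoints_of_eventually_add_smul_mem hv ?_
  simp only [mem_polarDual_convexHull_iff, Finset.mem_coe]
  refine (eventually_all_finset V).2 fun w hw => ?_
  simp only [add_dotProduct, smul_dotProduct, smul_eq_mul]
  by_cases htight : v ⬝ᵥ w = -1
  · simp [hy w (by simp [hw, htight]), htight]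
  · have hlt : -1 < v ⬝ᵥ w + 0 * (y ⬝ᵥ w) := by
      simpa using lt_of_le_of_ne (hv.1 w (subset_convexHull ℝ _ hw)) (Ne.symm htight)
    exact ((continuous_const.add (continuous_id.mul continuous_const)).tendsto 0).eventually
      (lt_mem_nhds hlt) |>.mono fun _ => le_of_lt

theorem exists_isPrimitive_separating {B : Finset (Fin n → ℝ)} {v u : Fin n → ℝ}
    (hB : span ℝ (B : Set (Fin n → ℝ)) = ⊤) (hcard : B.card = n)
    (hBint : ∀ w ∈ B, isIntegral w) (hvB : ∀ w ∈ B, v ⬝ᵥ w = -1) (hu : u ≠ 0)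
    (hvu : 0 ≤ v ⬝ᵥ u) :
    ∃ b ∈ B, ∃ χ, isPrimitive χ ∧ (∀ w ∈ B, w ≠ b → χ ⬝ᵥ w = 0) ∧ χ ⬝ᵥ b < 0 ∧ 0 < χ ⬝ᵥ u := by
  classical
  let e := B.equivFinOfCardEq hcard
  let b : Fin n → Fin n → ℝ := fun j => e.symm j
  have hbB : ∀ j, b j ∈ B := fun j => (e.symm j).2
  have hb : ∀ w ∈ B, ∃ j, b j = w := fun w hw => ⟨e ⟨w, hw⟩, by simp [b]⟩
  have hrange : Set.range b = B :=
    Set.Subset.antisymm (Set.range_subset_iff.2 hbB) fun w hw => hb w hw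
  let 𝔅 := basisOfTopLeSpanOfCardEqFinrank b (by rw [hrange, hB]) (by simp)
  have h𝔅 : ⇑𝔅 = b := coe_basisOfTopLeSpanOfCardEqFinrank _ _ _
  have hsum : ∑ j, 𝔅.repr u j = -(v ⬝ᵥ u) := by
    simp [𝔅.dotProduct_eq_sum_repr v u, h𝔅, hvB _ (hbB _)]
  obtain ⟨i, hi⟩ : ∃ i, 𝔅.repr u i < 0 := by
    by_contra! h
    have hzero := (Finset.sum_eq_zero_iff_of_nonneg fun j _ => h j).1
      (le_antisymm (by linarith) (Finset.sum_nonneg fun j _ => h j))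
    exact hu (by rw [← 𝔅.sum_repr u]; simp [hzero])
  obtain ⟨χ, hχ, c, hc, hχx⟩ :=
    exists_isPrimitive_dotProduct_eq_mul_repr 𝔅 (fun j => h𝔅 ▸ hBint _ (hbB j)) i
  have hχb : ∀ j, χ ⬝ᵥ b j = if j = i then c else 0 := fun j => by
    simp [hχx, ← h𝔅, Finsupp.single_apply]
  refine ⟨b i, hbB i, -χ, hχ.neg, fun w hw hwi => ?_, by simp [hχb, hc], ?_⟩
  · obtain ⟨j, rfl⟩ := hb w hw
    simp [hχb, show j ≠ i from fun h => hwi (h ▸ rfl)]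
  · rw [neg_dotProduct, hχx]
    nlinarith

end Facets

section Pseudoindex

variable {n : ℕ} {VQ VQd : Finset (Fin n → ℝ)}

theorem mem_and_facetVertices_eq_of_exchange
    (hVQd : (VQd : Set (Fin n → ℝ)) =
      (polarDual (convexHull ℝ (VQ : Set (Fin n → ℝ)))).extremePoints ℝ)
    (hsimp : ∀ v ∈ VQd, (facetVertices VQ v).card = n)
    {v v' b u₀ : Fin n → ℝ} (hv : v ∈ VQd) (hb : b ∈ facetVertices VQ v) (hu₀ : u₀ ∈ VQ)
    (hu₀span : u₀ ∉ span ℝ ((facetVertices VQ v).erase b : Set (Fin n → ℝ)))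
    (hv' : v' ∈ polarDual (convexHull ℝ (VQ : Set (Fin n → ℝ))))
    (hv'tight : ∀ w ∈ insert u₀ ((facetVertices VQ v).erase b), v' ⬝ᵥ w = -1) :
    v' ∈ VQd ∧ facetVertices VQ v' = insert u₀ ((facetVertices VQ v).erase b) := by
  set S := insert u₀ ((facetVertices VQ v).erase b)
  have hSVQ : S ⊆ VQ := Finset.insert_subset hu₀
    ((Finset.erase_subset _ _).trans (Finset.filter_subset _ _))
  have hSspan : span ℝ (S : Set (Fin n → ℝ)) = ⊤ := by
    rw [Finset.coe_insert]
    refine span_insert_eq_top_of_notMem_span (b := b) ?_ hu₀span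
    rw [← Finset.coe_insert, Finset.insert_erase hb]
    exact span_facetVertices_eq_top (hVQd ▸ Finset.mem_coe.2 hv)
  have hv'VQd : v' ∈ VQd := by
    have := mem_extremePoints_polarDual_of_span_eq_top hv'
      ((Finset.coe_subset.2 hSVQ).trans (subset_convexHull ℝ _)) hv'tight hSspan
    rwa [← hVQd] at this
  refine ⟨hv'VQd, (Finset.eq_of_subset_of_card_le (fun w hw => mem_facetVertices.2
      ⟨hSVQ hw, hv'tight w hw⟩) ?_).symm⟩
  have hn : 1 ≤ n := Finset.card_pos.2 ⟨b, hb⟩ |>.trans_eq (hsimp v hv)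
  rw [hsimp v' hv'VQd, Finset.card_insert_of_notMem fun h => hu₀span (subset_span h),
    Finset.card_erase_of_mem hb, hsimp v hv, Nat.sub_add_cancel hn]

theorem exists_mem_iotaSet_le_div
    (hVQd : (VQd : Set (Fin n → ℝ)) =
      (polarDual (convexHull ℝ (VQ : Set (Fin n → ℝ)))).extremePoints ℝ)
    (hsimp : ∀ v ∈ VQd, (facetVertices VQ v).card = n)
    {v b χ u : Fin n → ℝ} (hv : v ∈ VQd) (hb : b ∈ facetVertices VQ v) (hχ : isPrimitive χ)
    (hχF : ∀ w ∈ facetVertices VQ v, w ≠ b → χ ⬝ᵥ w = 0) (hχb : χ ⬝ᵥ b < 0)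
    (hu : u ∈ VQ) (hχu : 0 < χ ⬝ᵥ u) :
    ∃ t ∈ iotaSet VQ VQd, t ≤ (1 + v ⬝ᵥ u) / (χ ⬝ᵥ u) := by
  classical
  set F := facetVertices VQ v
  have hvP : v ∈ polarDual (convexHull ℝ (VQ : Set (Fin n → ℝ))) :=
    extremePoints_subset (hVQd ▸ Finset.mem_coe.2 hv)
  have hχF_nonpos : ∀ w ∈ F, χ ⬝ᵥ w ≤ 0 := fun w hw => by
    rcases eq_or_ne w b with rfl | hwb
    exacts [hχb.le, (hχF w hw hwb).le]
  -- `t` is the largest step `v - t • χ` can take inside `Q*`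
  obtain ⟨u₀, hu₀, hmin⟩ := (VQ.filter (0 < χ ⬝ᵥ ·)).exists_min_image
    (fun w => (1 + v ⬝ᵥ w) / (χ ⬝ᵥ w)) ⟨u, Finset.mem_filter.2 ⟨hu, hχu⟩⟩
  obtain ⟨hu₀VQ, hχu₀⟩ := Finset.mem_filter.1 hu₀
  set t := (1 + v ⬝ᵥ u₀) / (χ ⬝ᵥ u₀)
  have hvu₀ : v ⬝ᵥ u₀ ≠ -1 := fun h =>
    hχu₀.not_ge (hχF_nonpos u₀ (mem_facetVertices.2 ⟨hu₀VQ, h⟩))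
  have hv'P : v - t • χ ∈ polarDual (convexHull ℝ (VQ : Set (Fin n → ℝ))) :=
    sub_smul_mem_polarDual_convexHull hvP
      (div_nonneg (by linarith [mem_polarDual_convexHull_iff.1 hvP u₀ hu₀VQ]) hχu₀.le)
      fun w hw hχw => (le_div_iff₀ hχw).1 (hmin w (Finset.mem_filter.2 ⟨hw, hχw⟩))
  have hv'tight : ∀ w ∈ insert u₀ (F.erase b), (v - t • χ) ⬝ᵥ w = -1 := by
    intro w hw
    rcases Finset.mem_insert.1 hw with rfl | hw
    · simp [sub_dotProduct, t, hχu₀.ne']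
    · obtain ⟨hwb, hwF⟩ := Finset.mem_erase.1 hw
      simp [sub_dotProduct, hχF w hwF hwb, (mem_facetVertices.1 hwF).2]
  have hu₀span : u₀ ∉ span ℝ (F.erase b : Set (Fin n → ℝ)) := fun h =>
    hχu₀.ne' (dotProduct_eq_zero_of_mem_span (fun w hw =>
      hχF w (Finset.mem_of_mem_erase hw) (Finset.ne_of_mem_erase hw)) h)
  obtain ⟨hv', hfacet'⟩ :=
    mem_and_facetVertices_eq_of_exchange hVQd hsimp hv hb hu₀VQ hu₀span hv'P hv'tight
  have hwall : ∀ w ∈ VQ, (v - t • χ) ⬝ᵥ w = -1 → w ≠ u₀ → w ∈ F.erase b :=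
    fun w hw hv'w hwu₀ => (Finset.mem_insert.1
      (hfacet' ▸ mem_facetVertices.2 ⟨hw, hv'w⟩ : w ∈ insert u₀ (F.erase b))).resolve_left hwu₀
  have hu₀tight := hv'tight u₀ (Finset.mem_insert_self _ _)
  refine ⟨t, ⟨v, hv, v - t • χ, hv', fun h => hvu₀ (h ▸ hu₀tight), u₀, hu₀VQ, hu₀tight, hvu₀,
    fun w hw h₁ h₂ => ?_, χ, hχ, fun w hw h₁ h₂ => ?_, hχu₀, rfl⟩,
    hmin u (Finset.mem_filter.2 ⟨hu, hχu⟩)⟩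
  · exact (mem_facetVertices.1 (Finset.mem_of_mem_erase (hwall w hw h₁ h₂))).2
  · obtain ⟨hwb, hwF⟩ := Finset.mem_erase.1 (hwall w hw h₁ h₂)
    exact hχF w hwF hwb

theorem iota_sub_one_le_dotProduct (hn : 1 ≤ n)
    (hVQ : (VQ : Set (Fin n → ℝ)) = (convexHull ℝ (VQ : Set (Fin n → ℝ))).extremePoints ℝ)
    (h0 : (0 : Fin n → ℝ) ∈ interior (convexHull ℝ (VQ : Set (Fin n → ℝ))))
    (hVQd : (VQd : Set (Fin n → ℝ)) =
      (polarDual (convexHull ℝ (VQ : Set (Fin n → ℝ)))).extremePoints ℝ)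
    (hsimp : ∀ v ∈ VQd, (facetVertices VQ v).card = n)
    (hrefl : ∀ u ∈ VQ, isIntegral u) (hrefld : ∀ v ∈ VQd, isIntegral v)
    {ι : ℝ} (hι : ι ∈ lowerBounds (iotaSet VQ VQd))
    {v u : Fin n → ℝ} (hv : v ∈ VQd) (hu : u ∈ VQ) (hvu : v ⬝ᵥ u ≠ -1) :
    ι - 1 ≤ v ⬝ᵥ u := by
  have hvext : v ∈ (polarDual (convexHull ℝ (VQ : Set (Fin n → ℝ)))).extremePoints ℝ :=
    hVQd ▸ Finset.mem_coe.2 hv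
  have hvu_nonneg : 0 ≤ v ⬝ᵥ u := by
    obtain ⟨z, hz⟩ := (hrefld v hv).exists_dotProduct_eq (hrefl u hu)
    have h₁ : -1 ≤ z := by exact_mod_cast hz ▸ mem_polarDual_convexHull_iff.1 hvext.1 u hu
    have h₂ : z ≠ -1 := by exact_mod_cast hz ▸ hvu
    rw [hz]
    exact_mod_cast (show 0 ≤ z by omega)
  have hu_ne : u ≠ 0 := by
    have : Nonempty (Fin n) := ⟨⟨0, hn⟩⟩
    rintro rfl
    exact Set.disjoint_left.1 (disjoint_interior_extremePoints _) h0 (hVQ ▸ Finset.mem_coe.2 hu)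
  obtain ⟨b, hb, χ, hχ, hχF, hχb, hχu⟩ := exists_isPrimitive_separating
    (span_facetVertices_eq_top hvext) (hsimp v hv)
    (fun w hw => hrefl w (mem_facetVertices.1 hw).1) (fun w hw => (mem_facetVertices.1 hw).2)
    hu_ne hvu_nonneg
  obtain ⟨t, ht, htu⟩ := exists_mem_iotaSet_le_div hVQd hsimp hv hb hχ hχF hχb hu hχu
  have hχu_ge_one : 1 ≤ χ ⬝ᵥ u := by
    obtain ⟨z, hz⟩ := hχ.isIntegral.exists_dotProduct_eq (hrefl u hu)
    rw [hz] at hχu ⊢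
    exact_mod_cast (show 1 ≤ z by exact_mod_cast hχu)
  have hι_le := calc
    ι ≤ t := hι ht
    _ ≤ (1 + v ⬝ᵥ u) / (χ ⬝ᵥ u) := htu
    _ ≤ 1 + v ⬝ᵥ u := div_le_self (by linarith) hχu_ge_one
  linarith

end Pseudoindex

/-- For a full-dimensional simplicial reflexive polytope `Q ⊂ ℝ^n`, the
pseudo-index `ι_Q` satisfies `(ι_Q - 1) · (|V(Q)| - n) ≤ n`. -/
theorem pseudoindex_inequality {n : ℕ} (hn : 1 ≤ n)
    (VQ VQd : Finset (Fin n → ℝ))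
    -- `VQ` is the vertex set of the polytope `Q = conv(VQ)`
    (hVQ : (VQ : Set (Fin n → ℝ)) =
      Set.extremePoints ℝ (convexHull ℝ (VQ : Set (Fin n → ℝ))))
    -- `0` lies in the interior of `Q` (in particular `Q` is full-dimensional)
    (h0 : (0 : Fin n → ℝ) ∈ interior (convexHull ℝ (VQ : Set (Fin n → ℝ))))
    -- `VQd` is the vertex set of the polar dual `Q*`
    (hVQd : (VQd : Set (Fin n → ℝ)) =
      Set.extremePoints ℝ (polarDual (convexHull ℝ (VQ : Set (Fin n → ℝ)))))
    -- `Q` is simplicial: every facet has exactly `n` vertices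
    (hsimp : ∀ v ∈ VQd, (VQ.filter fun u => v ⬝ᵥ u = -1).card = n)
    -- `Q` is reflexive: vertices of `Q` and of `Q*` are lattice points
    (hrefl : ∀ u ∈ VQ, isIntegral u) (hrefld : ∀ v ∈ VQd, isIntegral v)
    -- `ι` is the pseudo-index `ι_Q`
    (ι : ℝ) (hι : IsLeast (iotaSet VQ VQd) ι) :
    (ι - 1) * ((VQ.card : ℝ) - n) ≤ n := by
  obtain ⟨v₀, hv₀, hv₀s⟩ := exists_mem_extremePoints_polarDual_dotProduct_nonpos
    (mem_interior_iff_mem_nhds.1 h0) (∑ u ∈ VQ, u)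
  rw [← hVQd, Finset.mem_coe] at hv₀
  set G := VQ.filter fun u => v₀ ⬝ᵥ u ≠ -1
  have hGcard : (G.card : ℝ) = VQ.card - n := by
    have h := Finset.card_filter_add_card_filter_not (s := VQ) (fun u => v₀ ⬝ᵥ u = -1)
    rw [hsimp v₀ hv₀] at h
    rw [← h]
    push_cast
    ring
  have hfacet : ∑ u ∈ VQ.filter (fun u => v₀ ⬝ᵥ u = -1), v₀ ⬝ᵥ u = -n := by
    rw [Finset.sum_congr rfl fun u hu => (Finset.mem_filter.1 hu).2, Finset.sum_const,
      hsimp v₀ hv₀, nsmul_eq_mul, mul_neg_one]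
  have hfar : G.card • (ι - 1) ≤ ∑ u ∈ G, v₀ ⬝ᵥ u :=
    Finset.card_nsmul_le_sum _ _ _ fun u hu => iota_sub_one_le_dotProduct hn hVQ h0 hVQd hsimp
      hrefl hrefld hι.2 hv₀ (Finset.mem_filter.1 hu).1 (Finset.mem_filter.1 hu).2
  rw [dotProduct_sum, ← Finset.sum_filter_add_sum_filter_not VQ (fun u => v₀ ⬝ᵥ u = -1),
    hfacet] at hv₀s
  rw [nsmul_eq_mul, hGcard] at hfar
  linarith
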